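/- Let x > 0 with x ∉ S, where S = { s·log q / log(1 + 1/r) : s, r positive integers }. Then a monic polynomial h ∈ 𝔽_q[t] is x-semi-superior highly composite if and only if h = ĥ(x); in particular there is exactly one x-SSHC polynomial. -/

import Mathlib

open Polynomial

/-- The number of monic divisors of a polynomial. -/
noncomputable def tau {Fq : Type} [Field Fq] (f : Fq[X]) : ℕ :=
  {d : Fq[X] | d.Monic ∧ d ∣ f}.ncard

/-- The multiplicity of `p` in the factorization of `f`. -/
noncomputable def mult {Fq : Type} [Field Fq] (p f : Fq[X]) : ℕ :=
  multiplicity p f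

/-- `h = ĥ(x)`: the monic polynomial whose multiplicity at each monic irreducible `p`
equals `⌊1/(q^{deg p / x} - 1)⌋`. -/
noncomputable def IsHhat {Fq : Type} [Field Fq] [Fintype Fq] (x : ℝ) (h : Fq[X]) : Prop :=
  h.Monic ∧ ∀ p : Fq[X], p.Monic → Irreducible p →
    mult p h = ⌊1 / ((Fintype.card Fq : ℝ) ^ ((p.natDegree : ℝ) / x) - 1)⌋₊

/-- `h` is an `x`-semi-superior highly composite polynomial. -/
noncomputable def IsSSHC {Fq : Type} [Field Fq] [Fintype Fq] (x : ℝ) (h : Fq[X]) : Prop :=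
  h.Monic ∧ ∀ f : Fq[X], f.Monic →
    (tau f : ℝ) * (Fintype.card Fq : ℝ) ^ (-(f.natDegree : ℝ) / x) ≤
    (tau h : ℝ) * (Fintype.card Fq : ℝ) ^ (-(h.natDegree : ℝ) / x)

/-- The set `S_q = { s log q / log(1 + 1/r) : s, r ≥ 1 }`. -/
def Sset (q : ℕ) : Set ℝ :=
  {x : ℝ | ∃ s r : ℕ, 0 < s ∧ 0 < r ∧ x = (s : ℝ) * Real.log q / Real.log (1 + 1 / (r : ℝ))}

/-!
For monic `f = ∏ p ^ eₚ` the weight `τ(f) q^(-deg f / x)` factors as `∏ (eₚ + 1) / Yₚ ^ eₚ` with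
`Yₚ = |p| ^ (1 / x) > 1`. The factor `(e + 1) / Y ^ e` increases while `(e + 1) (Y - 1) < 1` and
decreases afterwards, so it is maximal at `e = ⌊1 / (Y - 1)⌋`; the maximum is strict because for
`x ∉ S` the number `1 / (Y - 1)` is never a positive integer. Hence `ĥ(x)` maximizes the weight,
strictly against every other monic polynomial.
-/

open UniqueFactorizationMonoid

noncomputable def powWeight (Y : ℝ) (e : ℕ) : ℝ := (e + 1) / Y ^ e

lemma powWeight_pos {Y : ℝ} (hY : 0 < Y) (e : ℕ) : 0 < powWeight Y e := by
  unfold powWeight; positivity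

lemma powWeight_succ_sub {Y : ℝ} (hY : Y ≠ 0) (n : ℕ) :
    powWeight Y (n + 1) - powWeight Y n = (1 - (n + 1) * (Y - 1)) / Y ^ (n + 1) := by
  simp only [powWeight, pow_succ]
  push_cast
  field_simp
  ring

theorem powWeight_lt_powWeight_floor {Y : ℝ} (hY : 1 < Y) (hnat : ∀ n : ℕ, 1 / (Y - 1) ≠ n + 1)
    {e : ℕ} (he : e ≠ ⌊1 / (Y - 1)⌋₊) : powWeight Y e < powWeight Y ⌊1 / (Y - 1)⌋₊ := by
  set a := ⌊1 / (Y - 1)⌋₊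
  have hY1 : 0 < Y - 1 := sub_pos.mpr hY
  have hpow (n : ℕ) : 0 < Y ^ (n + 1) := pow_pos (by linarith) _
  rcases he.lt_or_gt with hea | hae
  · refine strictMonoOn_Iic_of_lt_succ (fun n hn => ?_) hea.le le_rfl hea
    have hlt : (n : ℝ) + 1 < 1 / (Y - 1) := by
      refine lt_of_le_of_ne ?_ (hnat n).symm
      calc (n : ℝ) + 1 ≤ a := by exact_mod_cast hn
        _ ≤ 1 / (Y - 1) := Nat.floor_le (by positivity)
    rw [Order.succ_eq_add_one, ← sub_pos, powWeight_succ_sub (by linarith)]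
    exact div_pos (by rwa [sub_pos, ← lt_div_iff₀ hY1]) (hpow n)
  · refine strictAntiOn_Ici_of_lt_pred (fun m hm => ?_) le_rfl hae.le hae
    obtain ⟨n, rfl⟩ := Nat.exists_eq_add_of_lt hm
    rw [Order.pred_eq_sub_one, show a + n + 1 - 1 = a + n by omega, ← sub_neg,
      powWeight_succ_sub (by linarith)]
    have hlt : 1 / (Y - 1) < ((a + n : ℕ) : ℝ) + 1 := by
      have := Nat.lt_floor_add_one (1 / (Y - 1))
      have : (a : ℝ) ≤ (a + n : ℕ) := by exact_mod_cast Nat.le_add_right a n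
      linarith
    exact div_neg_of_neg_of_pos (by rwa [sub_neg, ← div_lt_iff₀ hY1]) (hpow _)

theorem pow_dvd_mul_pow_iff {α : Type*} [CommMonoidWithZero α] [IsCancelMulZero α] {p c : α}
    (hp : p ≠ 0) (hc : ¬p ∣ c) {i k : ℕ} : p ^ i ∣ c * p ^ k ↔ i ≤ k := by
  refine ⟨fun h => ?_, fun h => (pow_dvd_pow p h).mul_left c⟩
  by_contra! hki
  have : p ^ k * p ∣ p ^ k * c := by
    rw [← pow_succ, mul_comm]
    exact (pow_dvd_pow p hki).trans h
  exact hc ((mul_dvd_mul_iff_left (pow_ne_zero k hp)).mp this)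

theorem multiplicity_mul_pow_of_not_dvd {α : Type*} [CommMonoidWithZero α] [IsCancelMulZero α]
    {p c : α} (hp : p ≠ 0) (hc : ¬p ∣ c) (k : ℕ) : multiplicity p (c * p ^ k) = k :=
  multiplicity_eq_of_dvd_of_not_dvd ((pow_dvd_mul_pow_iff hp hc).mpr le_rfl)
    (by rw [pow_dvd_mul_pow_iff hp hc]; omega)

section Divisors

variable {K : Type} [Field K]

theorem tau_one : tau (1 : K[X]) = 1 := by
  have : {d : K[X] | d.Monic ∧ d ∣ 1} = {1} := by
    ext d
    exact ⟨fun ⟨hd, hd1⟩ => hd.eq_one_of_isUnit (isUnit_of_dvd_one hd1),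
      by rintro rfl; exact ⟨monic_one, dvd_rfl⟩⟩
  rw [tau, this, Set.ncard_singleton]

theorem tau_mul_pow {g p : K[X]} (hp : p.Monic) (hpi : Irreducible p) (hpg : ¬p ∣ g) (k : ℕ) :
    tau (g * p ^ k) = (k + 1) * tau g := by
  have hsplit : {d | d.Monic ∧ d ∣ g * p ^ k} =
      (fun ci : K[X] × ℕ => ci.1 * p ^ ci.2) '' ({c | c.Monic ∧ c ∣ g} ×ˢ Set.Iic k) := by
    ext d
    constructor
    · rintro ⟨hdm, hdvd⟩
      obtain ⟨i, c, hpc, rfl⟩ := WfDvdMonoid.max_power_factor hdm.ne_zero hpi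
      have hcg : c ∣ g := ((hpi.coprime_iff_not_dvd.mpr hpc).symm.pow_right).dvd_of_dvd_mul_right
        (dvd_of_mul_left_dvd hdvd)
      refine ⟨(c, i), ⟨⟨(hp.pow i).of_mul_monic_left hdm, hcg⟩, ?_⟩, mul_comm _ _⟩
      exact (pow_dvd_mul_pow_iff hp.ne_zero hpg).mp (dvd_of_mul_right_dvd hdvd)
    · rintro ⟨⟨c, i⟩, ⟨⟨hcm, hcg⟩, hik⟩, rfl⟩
      exact ⟨hcm.mul (hp.pow i), mul_dvd_mul hcg (pow_dvd_pow p hik)⟩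
  have hinj : Set.InjOn (fun ci : K[X] × ℕ => ci.1 * p ^ ci.2)
      ({c | c.Monic ∧ c ∣ g} ×ˢ Set.Iic k) := by
    rintro ⟨c, i⟩ ⟨⟨-, hcg⟩, -⟩ ⟨c', j⟩ ⟨⟨-, hc'g⟩, -⟩ (heq : c * p ^ i = c' * p ^ j)
    have hpc : ¬p ∣ c := fun h => hpg (h.trans hcg)
    have hpc' : ¬p ∣ c' := fun h => hpg (h.trans hc'g)
    obtain rfl : i = j := le_antisymm
      ((pow_dvd_mul_pow_iff hp.ne_zero hpc').mp (heq ▸ dvd_mul_left _ _))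
      ((pow_dvd_mul_pow_iff hp.ne_zero hpc).mp (heq ▸ dvd_mul_left _ _))
    rw [mul_left_injective₀ (pow_ne_zero i hp.ne_zero) heq]
  rw [tau, hsplit, hinj.ncard_image, Set.ncard_prod, Set.ncard_Iic_nat, tau, mul_comm]

end Divisors

section Factorization

variable {K : Type} [Field K] {P : Finset K[X]}

theorem not_dvd_prod_pow (hP : ∀ r ∈ P, r.Monic ∧ Irreducible r) {p : K[X]} (hp : p.Monic)
    (hpi : Irreducible p) (hpP : p ∉ P) (v : K[X] → ℕ) : ¬p ∣ ∏ r ∈ P, r ^ v r := by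
  intro hdvd
  obtain ⟨r, hrP, hpr⟩ := (hpi.prime.dvd_finsetProd_iff _).mp hdvd
  have hpr : p = r := eq_of_monic_of_associated hp (hP r hrP).1
    (hpi.associated_of_dvd (hP r hrP).2 (hpi.prime.dvd_of_dvd_pow hpr))
  exact hpP (hpr ▸ hrP)

theorem mult_prod_pow_of_mem (hP : ∀ r ∈ P, r.Monic ∧ Irreducible r) {p : K[X]} (hpP : p ∈ P)
    (v : K[X] → ℕ) : mult p (∏ r ∈ P, r ^ v r) = v p := by
  classical
  obtain ⟨hp, hpi⟩ := hP p hpP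
  rw [mult, ← Finset.prod_erase_mul _ _ hpP, multiplicity_mul_pow_of_not_dvd hp.ne_zero
    (not_dvd_prod_pow (fun r hr => hP r (Finset.mem_of_mem_erase hr)) hp hpi
      (Finset.notMem_erase p P) v)]

theorem prod_pow_mult_eq_self (hP : ∀ r ∈ P, r.Monic ∧ Irreducible r) {f : K[X]} (hf : f.Monic)
    (hfP : ∀ p : K[X], p.Monic → Irreducible p → p ∣ f → p ∈ P) : ∏ p ∈ P, p ^ mult p f = f := by
  classical
  have hsub : (normalizedFactors f).toFinset ⊆ P := fun p hp => by
    obtain ⟨hpi, hpm, hpf⟩ := (Polynomial.mem_normalizedFactors_iff hf.ne_zero).mp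
      (Multiset.mem_toFinset.mp hp)
    exact hfP p hpm hpi hpf
  calc ∏ p ∈ P, p ^ mult p f = ∏ p ∈ P, p ^ (normalizedFactors f).count p := by
        refine Finset.prod_congr rfl fun p hpP => ?_
        rw [mult, multiplicity_eq_count_normalizedFactors (hP p hpP).2 hf.ne_zero,
          (hP p hpP).1.normalize_eq_self]
    _ = ∏ p ∈ (normalizedFactors f).toFinset, p ^ (normalizedFactors f).count p :=
        (Finset.prod_subset hsub fun p _ hp => by
          rw [Multiset.count_eq_zero.mpr (mt Multiset.mem_toFinset.mpr hp), pow_zero]).symm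
    _ = f := by
        rw [← Finset.prod_multiset_count, prod_normalizedFactors_eq hf.ne_zero,
          hf.normalize_eq_self]

end Factorization

section Weight

variable {Fq : Type} [Field Fq] [Fintype Fq]

noncomputable def weight (x : ℝ) (f : Fq[X]) : ℝ :=
  (tau f : ℝ) * (Fintype.card Fq : ℝ) ^ (-(f.natDegree : ℝ) / x)

/-- `|p| ^ (1 / x)`, where `|p| = q ^ deg p` is the norm of `p`. -/
noncomputable def rootNorm (x : ℝ) (p : Fq[X]) : ℝ :=
  (Fintype.card Fq : ℝ) ^ ((p.natDegree : ℝ) / x)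

lemma one_lt_card_real : (1 : ℝ) < Fintype.card Fq := by
  exact_mod_cast Fintype.one_lt_card

lemma rootNorm_pos (x : ℝ) (p : Fq[X]) : 0 < rootNorm x p :=
  Real.rpow_pos_of_pos (zero_lt_one.trans one_lt_card_real) _

theorem one_lt_rootNorm {x : ℝ} {p : Fq[X]} (hx : 0 < x) (hp : 0 < p.natDegree) :
    1 < rootNorm x p :=
  Real.one_lt_rpow one_lt_card_real (by positivity)

theorem floor_one_div_rootNorm_sub_one_eq_zero {x : ℝ} {p : Fq[X]} (hx : 0 < x)
    (hpx : x < p.natDegree) : ⌊1 / (rootNorm x p - 1)⌋₊ = 0 := by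
  have h2 : 2 < rootNorm x p := by
    calc (2 : ℝ) ≤ Fintype.card Fq := by exact_mod_cast Fintype.one_lt_card
      _ = (Fintype.card Fq : ℝ) ^ (1 : ℝ) := (Real.rpow_one _).symm
      _ < rootNorm x p := Real.rpow_lt_rpow_of_exponent_lt one_lt_card_real
          ((one_lt_div hx).mpr hpx)
  rw [Nat.floor_eq_zero, div_lt_one (by linarith)]
  linarith

theorem one_div_rootNorm_sub_one_ne {x : ℝ} {p : Fq[X]} (hx : 0 < x)
    (hxS : x ∉ Sset (Fintype.card Fq)) (hp : 0 < p.natDegree) (n : ℕ) :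
    1 / (rootNorm x p - 1) ≠ n + 1 := by
  intro h
  have hY : rootNorm x p = 1 + 1 / ((n + 1 : ℕ) : ℝ) := by
    have h' := (div_eq_iff (sub_pos.mpr (one_lt_rootNorm hx hp)).ne').mp h
    push_cast
    field_simp
    linarith
  have hlog : Real.log (1 + 1 / ((n + 1 : ℕ) : ℝ)) =
      p.natDegree / x * Real.log (Fintype.card Fq) := by
    rw [← hY, rootNorm, Real.log_rpow (zero_lt_one.trans one_lt_card_real)]
  refine hxS ⟨p.natDegree, n + 1, hp, n.succ_pos, ?_⟩
  have hlog_pos : 0 < Real.log (1 + 1 / ((n + 1 : ℕ) : ℝ)) := by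
    rw [← hY]; exact Real.log_pos (one_lt_rootNorm hx hp)
  rw [eq_div_iff hlog_pos.ne', hlog]
  field_simp

theorem weight_mul_pow (x : ℝ) {g p : Fq[X]} (hg : g ≠ 0) (hp : p.Monic) (hpi : Irreducible p)
    (hpg : ¬p ∣ g) (e : ℕ) : weight x (g * p ^ e) = weight x g * powWeight (rootNorm x p) e := by
  have hq : (0 : ℝ) < Fintype.card Fq := zero_lt_one.trans one_lt_card_real
  have hexp : (Fintype.card Fq : ℝ) ^ (-((g * p ^ e).natDegree : ℝ) / x) =
      (Fintype.card Fq : ℝ) ^ (-(g.natDegree : ℝ) / x) / rootNorm x p ^ e := by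
    rw [rootNorm, ← Real.rpow_natCast, ← Real.rpow_mul hq.le, ← Real.rpow_sub hq,
      natDegree_mul hg (pow_ne_zero e hp.ne_zero), natDegree_pow]
    congr 1
    push_cast
    ring
  rw [weight, weight, hexp, tau_mul_pow hp hpi hpg, powWeight]
  push_cast
  ring

theorem weight_prod_pow (x : ℝ) {P : Finset Fq[X]} (hP : ∀ r ∈ P, r.Monic ∧ Irreducible r)
    (v : Fq[X] → ℕ) : weight x (∏ r ∈ P, r ^ v r) = ∏ r ∈ P, powWeight (rootNorm x r) (v r) := by
  classical
  induction P using Finset.induction_on with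
  | empty => simp [weight, tau_one]
  | insert p P hpP ih =>
    have hP' : ∀ r ∈ P, r.Monic ∧ Irreducible r := fun r hr => hP r (Finset.mem_insert_of_mem hr)
    obtain ⟨hp, hpi⟩ := hP p (Finset.mem_insert_self p P)
    rw [Finset.prod_insert hpP, Finset.prod_insert hpP, mul_comm, mul_comm (powWeight _ _),
      weight_mul_pow x (monic_prod_of_monic _ _ fun r hr => (hP' r hr).1.pow _).ne_zero hp hpi
        (not_dvd_prod_pow hP' hp hpi hpP v), ih hP']

end Weight

section Main

variable {Fq : Type} [Field Fq] [Fintype Fq] {x : ℝ}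

theorem finite_setOf_natDegree_le (n : ℕ) : {f : Fq[X] | f.natDegree ≤ n}.Finite :=
  have : Finite (degreeLT Fq (n + 1)) := .of_equiv _ (degreeLTEquiv Fq (n + 1)).toEquiv.symm
  (degreeLT Fq (n + 1) : Set Fq[X]).toFinite.subset fun _ hf =>
    mem_degreeLT.mpr (degree_lt_iff_coeff_zero _ _ |>.mpr fun _ hm =>
      coeff_eq_zero_of_natDegree_lt (Nat.lt_of_le_of_lt hf hm))

theorem powWeight_lt_of_ne_mult (hx : 0 < x) (hxS : x ∉ Sset (Fintype.card Fq)) {h p : Fq[X]}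
    (hh : IsHhat x h) (hp : p.Monic) (hpi : Irreducible p) {e : ℕ} (he : e ≠ mult p h) :
    powWeight (rootNorm x p) e < powWeight (rootNorm x p) (mult p h) := by
  rw [hh.2 p hp hpi] at he ⊢
  exact powWeight_lt_powWeight_floor (one_lt_rootNorm hx hpi.natDegree_pos)
    (one_div_rootNorm_sub_one_ne hx hxS hpi.natDegree_pos) he

theorem exists_isHhat (hx : 0 < x) : ∃ h : Fq[X], IsHhat x h := by
  classical
  have hfin : {p : Fq[X] | p.Monic ∧ Irreducible p ∧ (p.natDegree : ℝ) ≤ x}.Finite :=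
    (finite_setOf_natDegree_le ⌊x⌋₊).subset fun p ⟨_, _, hpx⟩ => Nat.le_floor hpx
  have hP : ∀ r ∈ hfin.toFinset, r.Monic ∧ Irreducible r := fun r hr =>
    ⟨(hfin.mem_toFinset.mp hr).1, (hfin.mem_toFinset.mp hr).2.1⟩
  refine ⟨∏ p ∈ hfin.toFinset, p ^ ⌊1 / (rootNorm x p - 1)⌋₊,
    monic_prod_of_monic _ _ fun r hr => (hP r hr).1.pow _, fun p hp hpi => ?_⟩
  by_cases hpP : p ∈ hfin.toFinset
  · exact mult_prod_pow_of_mem hP hpP _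
  · have hpx : x < p.natDegree := by
      by_contra! hpx
      exact hpP (hfin.mem_toFinset.mpr ⟨hp, hpi, hpx⟩)
    rw [mult, multiplicity_eq_zero.mpr (not_dvd_prod_pow hP hp hpi hpP _)]
    exact (floor_one_div_rootNorm_sub_one_eq_zero hx hpx).symm

theorem weight_lt_of_isHhat (hx : 0 < x) (hxS : x ∉ Sset (Fintype.card Fq)) {f h : Fq[X]}
    (hh : IsHhat x h) (hf : f.Monic) (hfh : f ≠ h) : weight x f < weight x h := by
  classical
  set P := primeFactors f ∪ primeFactors h
  have hmem {g : Fq[X]} (hg : g.Monic) {p : Fq[X]} :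
      p ∈ primeFactors g ↔ Irreducible p ∧ p.Monic ∧ p ∣ g := by
    rw [mem_primeFactors, Polynomial.mem_normalizedFactors_iff hg.ne_zero]
  have hP : ∀ p ∈ P, p.Monic ∧ Irreducible p := by
    intro p hpP
    rcases Finset.mem_union.mp hpP with hpf | hph
    · exact ⟨((hmem hf).mp hpf).2.1, ((hmem hf).mp hpf).1⟩
    · exact ⟨((hmem hh.1).mp hph).2.1, ((hmem hh.1).mp hph).1⟩
  have hfP := prod_pow_mult_eq_self hP hf fun p hp hpi hpf =>
    Finset.mem_union_left _ ((hmem hf).mpr ⟨hpi, hp, hpf⟩)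
  have hhP := prod_pow_mult_eq_self hP hh.1 fun p hp hpi hph =>
    Finset.mem_union_right _ ((hmem hh.1).mpr ⟨hpi, hp, hph⟩)
  obtain ⟨p, hpP, hpne⟩ : ∃ p ∈ P, mult p f ≠ mult p h := by
    by_contra! heq
    exact hfh (hfP.symm.trans ((Finset.prod_congr rfl fun p hp => by rw [heq p hp]).trans hhP))
  rw [← hfP, ← hhP, weight_prod_pow x hP, weight_prod_pow x hP]
  refine Finset.prod_lt_prod (fun r _ => powWeight_pos (rootNorm_pos x r) _) (fun r hr => ?_)
    ⟨p, hpP, powWeight_lt_of_ne_mult hx hxS hh (hP p hpP).1 (hP p hpP).2 hpne⟩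
  obtain hrfh | hrfh := eq_or_ne (mult r f) (mult r h)
  · rw [hrfh]
  · exact (powWeight_lt_of_ne_mult hx hxS hh (hP r hr).1 (hP r hr).2 hrfh).le

theorem isSSHC_of_isHhat (hx : 0 < x) (hxS : x ∉ Sset (Fintype.card Fq)) {h : Fq[X]}
    (hh : IsHhat x h) : IsSSHC x h := by
  refine ⟨hh.1, fun f hf => ?_⟩
  obtain rfl | hfh := eq_or_ne f h
  · exact le_rfl
  · exact (weight_lt_of_isHhat hx hxS hh hf hfh).le

theorem eq_of_isSSHC_of_isHhat (hx : 0 < x) (hxS : x ∉ Sset (Fintype.card Fq)) {h ĥ : Fq[X]}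
    (hs : IsSSHC x h) (hĥ : IsHhat x ĥ) : h = ĥ := by
  by_contra hne
  exact (hs.2 ĥ hĥ.1).not_gt (weight_lt_of_isHhat hx hxS hĥ hs.1 hne)

end Main

/-- For `x ∉ S`, a monic polynomial is `x`-semi-superior highly composite iff it equals
`ĥ(x)`; in particular there is exactly one `x`-SSHC polynomial. -/
theorem sshc_iff_hhat_of_not_mem_S {Fq : Type} [Field Fq] [Fintype Fq]
    (x : ℝ) (hx : 0 < x) (hxS : x ∉ Sset (Fintype.card Fq)) :
    (∀ h : Fq[X], IsSSHC x h ↔ IsHhat x h) ∧ (∃! h : Fq[X], IsSSHC x h) := by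
  obtain ⟨ĥ, hĥ⟩ := exists_isHhat (Fq := Fq) hx
  have hiff (h : Fq[X]) : IsSSHC x h ↔ IsHhat x h :=
    ⟨fun hs => eq_of_isSSHC_of_isHhat hx hxS hs hĥ ▸ hĥ, isSSHC_of_isHhat hx hxS⟩
  exact ⟨hiff, ĥ, (hiff ĥ).mpr hĥ, fun h hs => eq_of_isSSHC_of_isHhat hx hxS hs hĥ⟩
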